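/- arXiv:0804.2730 — 2 statements merged into one kernel-verified Lean document; each statement's English description precedes it below -/
import Mathlib

section
/- Simplicity of the principal eigenvalue: if φ and ψ are twice continuously differentiable functions on ℝ^N with φ(x) > 0 and ψ(x) > 0 for all x, with φ, ψ, |∇φ|, |∇ψ|, √V·φ, √V·ψ square-integrable, and both satisfy the same eigenvalue equation −½Δφ + Vφ = λφ and −½Δψ + Vψ = λψ pointwise on ℝ^N, then there is a constant c > 0 with ψ = c·φ. -/
open MeasureTheory Filter Topology

/-- The Laplacian of a function `u : ℝ^N → ℝ`, as the sum of the second partial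
derivatives along the standard basis directions. -/
noncomputable def laplacian {N : ℕ} (u : EuclideanSpace ℝ (Fin N) → ℝ)
    (x : EuclideanSpace ℝ (Fin N)) : ℝ :=
  ∑ i : Fin N, fderiv ℝ (fderiv ℝ u) x (EuclideanSpace.single i 1) (EuclideanSpace.single i 1)

/-- `u` is an eigenfunction of `-½Δ + V` on `ℝ^N` with eigenvalue `lam`: `u` is twice
continuously differentiable, with `u`, `|∇u|` and `√V · u` square-integrable, and satisfies
`-½Δu + V u = lam u` pointwise. -/
def IsEigenfunction {N : ℕ} (V : EuclideanSpace ℝ (Fin N) → ℝ) (lam : ℝ)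
    (u : EuclideanSpace ℝ (Fin N) → ℝ) : Prop :=
  ContDiff ℝ 2 u ∧
  MemLp u 2 volume ∧ MemLp (fun x => ‖gradient u x‖) 2 volume ∧
  MemLp (fun x => Real.sqrt (V x) * u x) 2 volume ∧
  ∀ x, -(1 / 2 : ℝ) * laplacian u x + V x * u x = lam * u x

/-! Ground-state substitution: write `ψ = w φ`. The field `W = φ ∇ψ - ψ ∇φ = φ² ∇w` is
divergence free, because `div W = φ Δψ - ψ Δφ = 0` by the two eigenvalue equations. Testing
`div W = 0` against `χ² w` for a cutoff `χ` gives `∫ χ² φ² |∇w|² = -2 ∫ χ φ ψ ∇χ · ∇w`, hence by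
AM-GM `∫ χ² φ² |∇w|² ≤ 4 ∫ ψ² |∇χ|²`. Rescaled bumps that equal `1` on the ball of radius `R`
have gradients bounded uniformly in `R` and supported in `|x| ≥ R`, so the right-hand side is
bounded by a multiple of `∫_{|x| ≥ R} ψ²`, which tends to `0` since `ψ ∈ L²`. Hence `∇w = 0`. -/

section Wronskian

variable {E : Type*} [NormedAddCommGroup E] [NormedSpace ℝ E]

theorem fderiv_fderiv_apply {F : Type*} [NormedAddCommGroup F] [NormedSpace ℝ F] {u : E → F}
    {x : E} (h : DifferentiableAt ℝ (fderiv ℝ u) x) (v w : E) :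
    fderiv ℝ (fun y => fderiv ℝ u y v) x w = fderiv ℝ (fderiv ℝ u) x w v := by
  rw [fderiv_clm_apply h (differentiableAt_const v)]
  simp

theorem ContDiff.fderiv_apply_const {F : Type*} [NormedAddCommGroup F] [NormedSpace ℝ F]
    {u : E → F} {m n : WithTop ℕ∞} (hu : ContDiff ℝ n u) (hmn : m + 1 ≤ n) (v : E) :
    ContDiff ℝ m (fun x => fderiv ℝ u x v) :=
  (hu.fderiv_right hmn).clm_apply contDiff_const

noncomputable def wronskian (φ ψ : E → ℝ) (v : E) (x : E) : ℝ :=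
  φ x * fderiv ℝ ψ x v - ψ x * fderiv ℝ φ x v

variable {φ ψ : E → ℝ}

theorem contDiff_wronskian (hφ : ContDiff ℝ 2 φ) (hψ : ContDiff ℝ 2 ψ) (v : E) :
    ContDiff ℝ 1 (wronskian φ ψ v) :=
  ((hφ.of_le one_le_two).mul (hψ.fderiv_apply_const one_add_one_eq_two.le v)).sub
    ((hψ.of_le one_le_two).mul (hφ.fderiv_apply_const one_add_one_eq_two.le v))

theorem wronskian_eq_sq_mul_fderiv_div {x : E} (hφ : DifferentiableAt ℝ φ x)
    (hψ : DifferentiableAt ℝ ψ x) (hx : φ x ≠ 0) (v : E) :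
    wronskian φ ψ v x = φ x ^ 2 * fderiv ℝ (fun y => ψ y / φ y) x v := by
  have hinv := (hasDerivAt_inv hx).comp_hasFDerivAt x hφ.hasFDerivAt
  have hdiv : HasFDerivAt (fun y => ψ y / φ y)
      (ψ x • (-(φ x ^ 2)⁻¹ • fderiv ℝ φ x) + (φ x)⁻¹ • fderiv ℝ ψ x) x := by
    simpa only [div_eq_mul_inv, Function.comp_apply] using hψ.hasFDerivAt.fun_mul hinv
  rw [hdiv.fderiv, wronskian]
  simp only [add_apply, smul_apply, smul_eq_mul]
  field_simp
  ring

theorem fderiv_sq_mul_div_mul_wronskian {χ : E → ℝ} {x : E} (hχ : DifferentiableAt ℝ χ x)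
    (hφ : DifferentiableAt ℝ φ x) (hψ : DifferentiableAt ℝ ψ x) (hx : φ x ≠ 0) (v : E) :
    fderiv ℝ (fun y => χ y ^ 2 * (ψ y / φ y)) x v * wronskian φ ψ v x =
      (χ x * (φ x * fderiv ℝ (fun y => ψ y / φ y) x v)) ^ 2 +
        2 * (χ x * (φ x * fderiv ℝ (fun y => ψ y / φ y) x v) * (ψ x * fderiv ℝ χ x v)) := by
  have hw : DifferentiableAt ℝ (fun y => ψ y / φ y) x := by
    simpa only [div_eq_mul_inv] using hψ.fun_mul (hφ.fun_inv hx)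
  rw [(hχ.hasFDerivAt.pow 2).fun_mul hw.hasFDerivAt |>.fderiv,
    wronskian_eq_sq_mul_fderiv_div hφ hψ hx]
  simp only [add_apply, smul_apply, smul_eq_mul, nsmul_eq_mul]
  field_simp
  ring

theorem fderiv_wronskian_apply (hφ : ContDiff ℝ 2 φ) (hψ : ContDiff ℝ 2 ψ) (x v : E) :
    fderiv ℝ (wronskian φ ψ v) x v =
      φ x * fderiv ℝ (fderiv ℝ ψ) x v v - ψ x * fderiv ℝ (fderiv ℝ φ) x v v := by
  have hd : ∀ u : E → ℝ, ContDiff ℝ 2 u → DifferentiableAt ℝ (fderiv ℝ u) x := fun u hu =>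
    (hu.fderiv_right (m := 1) one_add_one_eq_two.le).differentiable one_ne_zero x
  have hd' : ∀ u : E → ℝ, ContDiff ℝ 2 u → DifferentiableAt ℝ (fun y => fderiv ℝ u y v) x :=
    fun u hu => (hu.fderiv_apply_const one_add_one_eq_two.le v).differentiable one_ne_zero x
  have hd0 : ∀ u : E → ℝ, ContDiff ℝ 2 u → DifferentiableAt ℝ u x := fun u hu =>
    hu.differentiable two_ne_zero x
  unfold wronskian
  rw [fderiv_fun_sub ((hd0 φ hφ).fun_mul (hd' ψ hψ)) ((hd0 ψ hψ).fun_mul (hd' φ hφ)),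
    fderiv_fun_mul (hd0 φ hφ) (hd' ψ hψ), fderiv_fun_mul (hd0 ψ hψ) (hd' φ hφ)]
  simp only [sub_apply, add_apply, smul_apply, smul_eq_mul, fderiv_fderiv_apply (hd φ hφ),
    fderiv_fderiv_apply (hd ψ hψ)]
  ring

end Wronskian

theorem exists_cutoff_fderiv_le {E : Type*} [NormedAddCommGroup E] [NormedSpace ℝ E]
    [FiniteDimensional ℝ E] :
    ∃ K, ∀ R ≥ (1 : ℝ), ∃ χ : E → ℝ, ContDiff ℝ 1 χ ∧ HasCompactSupport χ ∧
      (∀ x, ‖x‖ ≤ R → χ x = 1) ∧ (∀ x, ‖fderiv ℝ χ x‖ ≤ K) ∧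
      ∀ x, ‖x‖ < R → fderiv ℝ χ x = 0 := by
  let b : ContDiffBump (0 : E) := ⟨1, 2, one_pos, one_lt_two⟩
  obtain ⟨K, hK⟩ := ((b.contDiff (n := 1)).continuous_fderiv one_ne_zero)
    |>.bounded_above_of_compact_support (b.hasCompactSupport.fderiv (𝕜 := ℝ))
  refine ⟨K, fun R hR => ?_⟩
  have hR0 : 0 < R := by positivity
  have hχ : ∀ x : E, ‖x‖ ≤ R → b (R⁻¹ • x) = 1 := fun x hx => by
    apply b.one_of_mem_closedBall
    rw [Metric.mem_closedBall, dist_zero_right, norm_smul, norm_inv, Real.norm_of_nonneg hR0.le]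
    exact inv_mul_le_one_of_le₀ hx hR0.le
  refine ⟨fun x => b (R⁻¹ • x), b.contDiff.comp (contDiff_const_smul _),
    b.hasCompactSupport.comp_smul (inv_ne_zero hR0.ne'), hχ, fun x => ?_, fun x hx => ?_⟩
  · rw [fderiv_comp_smul, norm_smul, norm_inv, Real.norm_of_nonneg hR0.le]
    exact (mul_le_of_le_one_left (norm_nonneg _) (inv_le_one_of_one_le₀ hR)).trans (hK _)
  · have : (fun x => b (R⁻¹ • x)) =ᶠ[𝓝 x] fun _ => 1 := by
      filter_upwards [Metric.isOpen_ball.mem_nhds (mem_ball_zero_iff.2 hx)] with y hy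
      exact hχ y (mem_ball_zero_iff.1 hy).le
    rw [this.fderiv_eq, fderiv_const_apply]

theorem tendsto_setIntegral_norm_ge_atTop {E F : Type*} [NormedAddCommGroup E] [MeasurableSpace E]
    [OpensMeasurableSpace E] [NormedAddCommGroup F] [NormedSpace ℝ F] {μ : Measure E}
    {g : E → F} (hg : Integrable g μ) :
    Tendsto (fun R : ℝ => ∫ x in {x | R ≤ ‖x‖}, g x ∂μ) atTop (𝓝 0) := by
  have h := tendsto_setIntegral_of_antitone (μ := μ) (s := fun R : ℝ => {x : E | R ≤ ‖x‖})
    (fun R => measurableSet_le measurable_const continuous_norm.measurable)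
    (fun R S hRS x hx => le_trans hRS hx) ⟨0, hg.integrableOn⟩
  have hempty : ⋂ R : ℝ, {x : E | R ≤ ‖x‖} = ∅ :=
    Set.eq_empty_of_forall_notMem fun x hx => (lt_add_one ‖x‖).not_ge (Set.mem_iInter.1 hx _)
  rwa [hempty, Measure.restrict_empty, integral_zero_measure] at h

section Euclidean

variable {N : ℕ} {φ ψ : EuclideanSpace ℝ (Fin N) → ℝ}

local notation "𝐞" i => EuclideanSpace.single i (1 : ℝ)

theorem sum_fderiv_wronskian_single (hφ : ContDiff ℝ 2 φ) (hψ : ContDiff ℝ 2 ψ)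
    (x : EuclideanSpace ℝ (Fin N)) :
    ∑ i, fderiv ℝ (wronskian φ ψ (𝐞 i)) x (𝐞 i) = φ x * laplacian ψ x - ψ x * laplacian φ x := by
  simp only [fderiv_wronskian_apply hφ hψ, laplacian, Finset.mul_sum, Finset.sum_sub_distrib]

theorem integral_sum_fderiv_mul_wronskian_eq_zero (hφ : ContDiff ℝ 2 φ) (hψ : ContDiff ℝ 2 ψ)
    (hΔ : ∀ x, φ x * laplacian ψ x = ψ x * laplacian φ x) {f : EuclideanSpace ℝ (Fin N) → ℝ}
    (hf : ContDiff ℝ 1 f) (hfc : HasCompactSupport f) :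
    ∫ x, ∑ i, fderiv ℝ f x (𝐞 i) * wronskian φ ψ (𝐞 i) x = 0 := by
  have hW := fun i => contDiff_wronskian hφ hψ (𝐞 i)
  have hint : ∀ i, Integrable fun x => fderiv ℝ f x (𝐞 i) * wronskian φ ψ (𝐞 i) x := fun i =>
    (((hf.continuous_fderiv one_ne_zero).clm_apply continuous_const).mul
      (hW i).continuous).integrable_of_hasCompactSupport (hfc.fderiv_apply (𝕜 := ℝ) _).mul_right
  have hint' : ∀ i, Integrable fun x => f x * fderiv ℝ (wronskian φ ψ (𝐞 i)) x (𝐞 i) := fun i =>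
    (hf.continuous.mul (((hW i).continuous_fderiv one_ne_zero).clm_apply
      continuous_const)).integrable_of_hasCompactSupport hfc.mul_right
  have hibp : ∀ i, ∫ x, fderiv ℝ f x (𝐞 i) * wronskian φ ψ (𝐞 i) x =
      -∫ x, f x * fderiv ℝ (wronskian φ ψ (𝐞 i)) x (𝐞 i) := fun i => by
    rw [integral_mul_fderiv_eq_neg_fderiv_mul_of_integrable (hint i) (hint' i)
      ((hf.continuous.mul (hW i).continuous).integrable_of_hasCompactSupport hfc.mul_right)
      (fun x _ => hf.differentiable one_ne_zero x)
      (fun x _ => (hW i).differentiable one_ne_zero x), neg_neg]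
  calc ∫ x, ∑ i, fderiv ℝ f x (𝐞 i) * wronskian φ ψ (𝐞 i) x
      = -∑ i, ∫ x, f x * fderiv ℝ (wronskian φ ψ (𝐞 i)) x (𝐞 i) := by
        rw [integral_finsetSum _ fun i _ => hint i, ← Finset.sum_neg_distrib]
        exact Finset.sum_congr rfl fun i _ => hibp i
    _ = -∫ x, f x * (φ x * laplacian ψ x - ψ x * laplacian φ x) := by
        simp only [← integral_finsetSum _ fun i _ => hint' i, ← Finset.mul_sum,
          sum_fderiv_wronskian_single hφ hψ]
    _ = 0 := by simp [hΔ]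

theorem integral_cutoff_sq_mul_le (hφ : ContDiff ℝ 2 φ) (hψ : ContDiff ℝ 2 ψ)
    (hφ0 : ∀ x, φ x ≠ 0) (hΔ : ∀ x, φ x * laplacian ψ x = ψ x * laplacian φ x)
    {χ : EuclideanSpace ℝ (Fin N) → ℝ} (hχ : ContDiff ℝ 1 χ) (hχc : HasCompactSupport χ) :
    ∫ x, χ x ^ 2 * ∑ i, (φ x * fderiv ℝ (fun y => ψ y / φ y) x (𝐞 i)) ^ 2 ≤
      4 * ∫ x, ∑ i, (ψ x * fderiv ℝ χ x (𝐞 i)) ^ 2 := by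
  set w := fun y => ψ y / φ y
  have hw : ContDiff ℝ 1 w := (hψ.of_le one_le_two).div (hφ.of_le one_le_two) hφ0
  set a := fun i x => χ x * (φ x * fderiv ℝ w x (𝐞 i))
  set b := fun i x => ψ x * fderiv ℝ χ x (𝐞 i)
  have ha : ∀ i, Continuous (a i) := fun i => hχ.continuous.mul (hφ.continuous.mul
    ((hw.continuous_fderiv one_ne_zero).clm_apply continuous_const))
  have hb : ∀ i, Continuous (b i) := fun i => hψ.continuous.mul
    ((hχ.continuous_fderiv one_ne_zero).clm_apply continuous_const)
  have hab0 : ∀ x ∉ tsupport χ, ∀ i, a i x = 0 ∧ b i x = 0 := fun x hx i => by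
    simp [a, b, image_eq_zero_of_notMem_tsupport hx, fderiv_of_notMem_tsupport ℝ hx]
  have hint : ∀ g : EuclideanSpace ℝ (Fin N) → ℝ, Continuous g → (∀ x ∉ tsupport χ, g x = 0) →
      Integrable g := fun g hg hg0 =>
    hg.integrable_of_hasCompactSupport (HasCompactSupport.intro hχc hg0)
  have hsq : ∀ x, χ x ^ 2 * ∑ i, (φ x * fderiv ℝ w x (𝐞 i)) ^ 2 = ∑ i, a i x ^ 2 := fun x => by
    simp only [a, Finset.mul_sum, mul_pow]
  simp only [hsq]
  have hA : Integrable fun x => ∑ i, a i x ^ 2 :=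
    hint _ (continuous_finsetSum _ fun i _ => (ha i).pow 2) fun x hx => by simp [hab0 x hx]
  have hB : Integrable fun x => ∑ i, b i x ^ 2 :=
    hint _ (continuous_finsetSum _ fun i _ => (hb i).pow 2) fun x hx => by simp [hab0 x hx]
  have hAB : Integrable fun x => ∑ i, (a i x ^ 2 + 2 * (a i x * b i x)) :=
    hint _ (continuous_finsetSum _ fun i _ => ((ha i).pow 2).add
      (continuous_const.mul ((ha i).mul (hb i)))) fun x hx => by simp [hab0 x hx]
  have hf : ContDiff ℝ 1 fun x => χ x ^ 2 * w x := (hχ.pow 2).mul hw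
  have hfc : HasCompactSupport fun x => χ x ^ 2 * w x := HasCompactSupport.intro hχc fun x hx => by
    simp [image_eq_zero_of_notMem_tsupport hx]
  have hpt : ∀ x, ∑ i, fderiv ℝ (fun x => χ x ^ 2 * w x) x (𝐞 i) * wronskian φ ψ (𝐞 i) x =
      ∑ i, (a i x ^ 2 + 2 * (a i x * b i x)) := fun x =>
    Finset.sum_congr rfl fun i _ => fderiv_sq_mul_div_mul_wronskian
      (hχ.differentiable one_ne_zero x) (hφ.differentiable two_ne_zero x)
      (hψ.differentiable two_ne_zero x) (hφ0 x) (𝐞 i)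
  have hzero := integral_sum_fderiv_mul_wronskian_eq_zero hφ hψ hΔ hf hfc
  simp only [hpt] at hzero
  have hamgm : ∀ x, (1 / 2) * ∑ i, a i x ^ 2 - 2 * ∑ i, b i x ^ 2 ≤
      ∑ i, (a i x ^ 2 + 2 * (a i x * b i x)) := fun x => by
    rw [Finset.mul_sum, Finset.mul_sum, ← Finset.sum_sub_distrib]
    exact Finset.sum_le_sum fun i _ => by nlinarith [sq_nonneg (a i x + 2 * b i x)]
  have hineq := integral_mono (f := fun x => 1 / 2 * ∑ i, a i x ^ 2 - 2 * ∑ i, b i x ^ 2)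
    ((hA.const_mul (1 / 2)).sub (hB.const_mul 2)) hAB hamgm
  rw [hzero, integral_sub (hA.const_mul _) (hB.const_mul _), integral_const_mul,
    integral_const_mul] at hineq
  linarith

theorem integral_sum_sq_mul_fderiv_le {χ : EuclideanSpace ℝ (Fin N) → ℝ} (hψ : MemLp ψ 2 volume)
    {K R : ℝ} (hχK : ∀ x, ‖fderiv ℝ χ x‖ ≤ K) (hχ0 : ∀ x, ‖x‖ < R → fderiv ℝ χ x = 0) :
    ∫ x, ∑ i, (ψ x * fderiv ℝ χ x (𝐞 i)) ^ 2 ≤ N * K ^ 2 * ∫ x in {x | R ≤ ‖x‖}, ψ x ^ 2 := by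
  have hS : MeasurableSet {x : EuclideanSpace ℝ (Fin N) | R ≤ ‖x‖} :=
    measurableSet_le measurable_const continuous_norm.measurable
  rw [← integral_indicator hS, ← integral_const_mul]
  refine integral_mono_of_nonneg (Eventually.of_forall fun x => by positivity)
    ((hψ.integrable_sq.indicator hS).const_mul _) (Eventually.of_forall fun x => ?_)
  by_cases hx : R ≤ ‖x‖
  · have hi : ∀ i, fderiv ℝ χ x (𝐞 i) ^ 2 ≤ K ^ 2 := fun i => by
      have h := (fderiv ℝ χ x).le_opNorm (𝐞 i)
      rw [PiLp.norm_single, norm_one, mul_one, Real.norm_eq_abs] at h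
      simpa only [sq_abs] using pow_le_pow_left₀ (abs_nonneg _) (h.trans (hχK x)) 2
    calc ∑ i, (ψ x * fderiv ℝ χ x (𝐞 i)) ^ 2 ≤ ∑ _i : Fin N, ψ x ^ 2 * K ^ 2 :=
          Finset.sum_le_sum fun i _ => by
            rw [mul_pow]; exact mul_le_mul_of_nonneg_left (hi i) (sq_nonneg _)
      _ = _ := by simp [Set.indicator_of_mem (show x ∈ {x | R ≤ ‖x‖} from hx)]; ring
  · simp [hχ0 x (not_le.1 hx), Set.indicator_of_notMem (show x ∉ {x | R ≤ ‖x‖} from hx)]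

theorem fderiv_div_eq_zero_of_memLp (hφ : ContDiff ℝ 2 φ) (hψ : ContDiff ℝ 2 ψ) (hφ0 : ∀ x, φ x ≠ 0)
    (hΔ : ∀ x, φ x * laplacian ψ x = ψ x * laplacian φ x) (hψ2 : MemLp ψ 2 volume)
    (x : EuclideanSpace ℝ (Fin N)) : fderiv ℝ (fun y => ψ y / φ y) x = 0 := by
  set q := fun x => ∑ i, (φ x * fderiv ℝ (fun y => ψ y / φ y) x (𝐞 i)) ^ 2
  have hw : ContDiff ℝ 1 (fun y => ψ y / φ y) :=
    (hψ.of_le one_le_two).div (hφ.of_le one_le_two) hφ0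
  have hq : Continuous q := continuous_finsetSum _ fun i _ =>
    (hφ.continuous.mul ((hw.continuous_fderiv one_ne_zero).clm_apply continuous_const)).pow 2
  have hq0 : ∀ x, 0 ≤ q x := fun x => Finset.sum_nonneg fun i _ => sq_nonneg _
  obtain ⟨K, hK⟩ := exists_cutoff_fderiv_le (E := EuclideanSpace ℝ (Fin N))
  have hball : ∀ r R, 1 ≤ R → r ≤ R →
      ∫ x in Metric.ball 0 r, q x ≤ 4 * (N * K ^ 2 * ∫ x in {x | R ≤ ‖x‖}, ψ x ^ 2) := by
    intro r R hR hrR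
    obtain ⟨χ, hχ, hχc, hχ1, hχK, hχ0⟩ := hK R hR
    calc ∫ x in Metric.ball 0 r, q x = ∫ x in Metric.ball 0 r, χ x ^ 2 * q x :=
          setIntegral_congr_fun measurableSet_ball fun x hx => by
            simp [hχ1 x (by linarith [mem_ball_zero_iff.1 hx])]
      _ ≤ ∫ x, χ x ^ 2 * q x := setIntegral_le_integral
          (((hχ.continuous.pow 2).mul hq).integrable_of_hasCompactSupport
            (HasCompactSupport.intro hχc fun x hx => by
              simp [image_eq_zero_of_notMem_tsupport hx]))
          (Eventually.of_forall fun x => mul_nonneg (sq_nonneg _) (hq0 x))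
      _ ≤ 4 * ∫ x, ∑ i, (ψ x * fderiv ℝ χ x (𝐞 i)) ^ 2 :=
          integral_cutoff_sq_mul_le hφ hψ hφ0 hΔ hχ hχc
      _ ≤ _ := by gcongr; exact integral_sum_sq_mul_fderiv_le hψ2 hχK hχ0
  have hr : ∀ r, ∫ x in Metric.ball 0 r, q x ≤ 0 := fun r => by
    have h := ((tendsto_setIntegral_norm_ge_atTop hψ2.integrable_sq).const_mul
      ((N : ℝ) * K ^ 2)).const_mul 4
    rw [mul_zero, mul_zero] at h
    exact ge_of_tendsto h ((eventually_ge_atTop (max 1 r)).mono fun R hR =>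
      hball r R (le_of_max_le_left hR) (le_of_max_le_right hR))
  have hqx : q x = 0 := by
    have hint : IntegrableOn q (Metric.ball 0 (‖x‖ + 1)) :=
      (hq.continuousOn.integrableOn_compact (isCompact_closedBall 0 _)).mono_set
        Metric.ball_subset_closedBall
    have hae : q =ᵐ[volume.restrict (Metric.ball 0 (‖x‖ + 1))] 0 :=
      (setIntegral_eq_zero_iff_of_nonneg_ae (Eventually.of_forall hq0) hint).1
        (le_antisymm (hr _) (setIntegral_nonneg measurableSet_ball fun y _ => hq0 y))
    exact Measure.eqOn_open_of_ae_eq hae Metric.isOpen_ball hq.continuousOn continuousOn_const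
      (mem_ball_zero_iff.2 (lt_add_one _))
  have hi : ∀ i, fderiv ℝ (fun y => ψ y / φ y) x (𝐞 i) = 0 := fun i => by
    simpa [hφ0 x] using (Finset.sum_eq_zero_iff_of_nonneg fun i _ => sq_nonneg _).1 hqx i
      (Finset.mem_univ i)
  exact ContinuousLinearMap.coe_injective
    ((EuclideanSpace.basisFun (Fin N) ℝ).toBasis.ext fun i => by simpa using hi i)

end Euclidean

theorem IsEigenfunction.mul_laplacian_eq {N : ℕ} {V : EuclideanSpace ℝ (Fin N) → ℝ} {lam : ℝ}
    {φ ψ : EuclideanSpace ℝ (Fin N) → ℝ} (hφ : IsEigenfunction V lam φ)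
    (hψ : IsEigenfunction V lam ψ) (x : EuclideanSpace ℝ (Fin N)) :
    φ x * laplacian ψ x = ψ x * laplacian φ x := by
  linear_combination (-2 * φ x) * hψ.2.2.2.2 x + (2 * ψ x) * hφ.2.2.2.2 x

theorem principal_eigenvalue_simple_general {N : ℕ}
    (V : EuclideanSpace ℝ (Fin N) → ℝ)
    (lam : ℝ) (φ ψ : EuclideanSpace ℝ (Fin N) → ℝ)
    (hφpos : ∀ x, 0 < φ x) (hψpos : ∀ x, 0 < ψ x)
    (hφ : IsEigenfunction V lam φ) (hψ : IsEigenfunction V lam ψ) :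
    ∃ c : ℝ, 0 < c ∧ ψ = fun x => c * φ x := by
  have hφ0 : ∀ x, φ x ≠ 0 := fun x => (hφpos x).ne'
  have hconst := is_const_of_fderiv_eq_zero
    ((hψ.1.div hφ.1 hφ0).differentiable two_ne_zero)
    (fderiv_div_eq_zero_of_memLp hφ.1 hψ.1 hφ0 (hφ.mul_laplacian_eq hψ) hψ.2.1)
  refine ⟨ψ 0 / φ 0, div_pos (hψpos 0) (hφpos 0), funext fun x => ?_⟩
  have h := hconst x 0
  simp only [Pi.div_apply] at h
  rw [← h]
  field_simp [hφ0 x]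

/-- simplicity of the principal eigenvalue: two everywhere-positive
eigenfunctions of `-½Δ + V` with the same eigenvalue `λ` are proportional, `ψ = c·φ`
with `c > 0`. -/
theorem principal_eigenvalue_simple {N : ℕ} (hN : 1 ≤ N)
    (V : EuclideanSpace ℝ (Fin N) → ℝ)
    (hVcont : Continuous V) (hVnonneg : ∀ x, 0 ≤ V x)
    (hVinf : ∀ M : ℝ, ∃ R : ℝ, ∀ x, R ≤ ‖x‖ → M ≤ V x)
    (lam : ℝ) (φ ψ : EuclideanSpace ℝ (Fin N) → ℝ)
    (hφpos : ∀ x, 0 < φ x) (hψpos : ∀ x, 0 < ψ x)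
    (hφ : IsEigenfunction V lam φ) (hψ : IsEigenfunction V lam ψ) :
    ∃ c : ℝ, 0 < c ∧ ψ = fun x => c * φ x :=
  principal_eigenvalue_simple_general V lam φ ψ hφpos hψpos hφ hψ
end

section
/- Cutoff value of the chemical potential in the one-dimensional box model: let 0 < a < L and λ > 0, and let u : ℝ → ℝ be continuous on [a, L] and twice differentiable on (a, L), with u(x) > 0 for all x ∈ (a, L), u(L) = 0, and −½u''(x) = λu(x) for all x ∈ (a, L). Then λ ≤ π²/(2(L − a)²). -/
/-!
If `λ > π² / (2 (L - a)²)`, put `k = √(2λ)`, so that `π / k < L - a`. On `(a, L)` the equation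
`u'' = -k² u` forces `u x = A sin (k (x - L)) + B cos (k (x - L))`; continuity at `L` and
`u L = 0` give `B = 0`, so `u` vanishes at `L - π / k ∈ (a, L)`, contradicting positivity.
-/

open Real Set

/-- `k * u = P sin θ + Q cos θ` with `θ = k (x - c)`, where `P = k u sin θ + u' cos θ` and
`Q = k u cos θ - u' sin θ` are first integrals of `u'' = -k² u`. -/
theorem exists_eqOn_sin_cos_of_hasDerivAt {s : Set ℝ} (hs : IsOpen s) (hs' : IsPreconnected s)
    {u u' : ℝ → ℝ} {k : ℝ} (hk : k ≠ 0) (c : ℝ)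
    (hu : ∀ x ∈ s, HasDerivAt u (u' x) x) (hu' : ∀ x ∈ s, HasDerivAt u' (-k ^ 2 * u x) x) :
    ∃ A B : ℝ, EqOn u (fun x ↦ A * sin (k * (x - c)) + B * cos (k * (x - c))) s := by
  have hθ (x : ℝ) : HasDerivAt (fun y ↦ k * (y - c)) k x := by
    simpa using ((hasDerivAt_id x).sub_const c).const_mul k
  have const_of_hasDerivAt_zero {f : ℝ → ℝ} (hf : ∀ x ∈ s, HasDerivAt f 0 x) :
      ∃ p, ∀ x ∈ s, f x = p :=
    hs.exists_is_const_of_deriv_eq_zero hs'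
      (fun x hx ↦ (hf x hx).differentiableAt.differentiableWithinAt)
      (fun x hx ↦ (hf x hx).deriv)
  obtain ⟨p, hp⟩ := const_of_hasDerivAt_zero (f := fun x ↦
    k * u x * sin (k * (x - c)) + u' x * cos (k * (x - c))) fun x hx ↦
      ((((hu x hx).const_mul k).mul (hθ x).sin).add
        ((hu' x hx).mul (hθ x).cos)).congr_deriv (by ring)
  obtain ⟨q, hq⟩ := const_of_hasDerivAt_zero (f := fun x ↦
    k * u x * cos (k * (x - c)) - u' x * sin (k * (x - c))) fun x hx ↦
      ((((hu x hx).const_mul k).mul (hθ x).cos).sub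
        ((hu' x hx).mul (hθ x).sin)).congr_deriv (by ring)
  refine ⟨p / k, q / k, fun x hx ↦ ?_⟩
  dsimp only
  rw [div_mul_eq_mul_div, div_mul_eq_mul_div, ← add_div, eq_div_iff hk, ← hp x hx,
    ← hq x hx]
  linear_combination (-(k * u x)) * sin_sq_add_cos_sq (k * (x - c))

theorem pi_div_sqrt_lt_of_lt {ℓ lam : ℝ} (hℓ : 0 < ℓ) (h : π ^ 2 / (2 * ℓ ^ 2) < lam) :
    π / √(2 * lam) < ℓ := by
  have hlam : 0 < 2 * lam := by linarith [(by positivity : 0 ≤ π ^ 2 / (2 * ℓ ^ 2))]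
  rw [div_lt_iff₀ (sqrt_pos.2 hlam)]
  refine lt_of_pow_lt_pow_left₀ 2 (by positivity) ?_
  rw [mul_pow, sq_sqrt hlam.le]
  rw [div_lt_iff₀ (by positivity)] at h
  linarith

theorem chemical_potential_cutoff_1d_general (a L lam : ℝ)
    (haL : a < L)
    (u : ℝ → ℝ)
    (hucont : ContinuousOn u (Set.Icc a L))
    (hud : ∀ x ∈ Set.Ioo a L, DifferentiableAt ℝ u x)
    (hud2 : ∀ x ∈ Set.Ioo a L, DifferentiableAt ℝ (deriv u) x)
    (hupos : ∀ x ∈ Set.Ioo a L, 0 < u x)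
    (huL : u L = 0)
    (heq : ∀ x ∈ Set.Ioo a L, -(1 / 2 : ℝ) * deriv (deriv u) x = lam * u x) :
    lam ≤ π ^ 2 / (2 * (L - a) ^ 2) := by
  by_contra! hcut
  have hlam : 0 < lam := (by positivity : 0 ≤ π ^ 2 / (2 * (L - a) ^ 2)).trans_lt hcut
  set k := √(2 * lam)
  have hk : 0 < k := sqrt_pos.2 (by positivity)
  have hk2 : k ^ 2 = 2 * lam := sq_sqrt (by positivity)
  obtain ⟨A, B, hAB⟩ := exists_eqOn_sin_cos_of_hasDerivAt isOpen_Ioo isPreconnected_Ioo hk.ne' L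
    (fun x hx ↦ (hud x hx).hasDerivAt) fun x hx ↦
      (hud2 x hx).hasDerivAt.congr_deriv (by rw [hk2]; linarith [heq x hx])
  have hB : B = 0 := by
    have := hAB.of_subset_closure hucont (by fun_prop) Ioo_subset_Icc_self
      (closure_Ioo haL.ne).superset (right_mem_Icc.2 haL.le)
    simpa [huL] using this.symm
  have hx₀ : L - π / k ∈ Ioo a L := by
    have := pi_div_sqrt_lt_of_lt (sub_pos.2 haL) hcut
    constructor <;> linarith [div_pos pi_pos hk]
  have hu₀ : u (L - π / k) = 0 := by simp [hAB hx₀, hB, mul_div_cancel₀ π hk.ne']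
  exact (hupos _ hx₀).ne' hu₀

/-- cutoff value of the chemical potential in the one-dimensional box model:
if `0 < a < L`, `λ > 0`, and `u` is continuous on `[a, L]`, twice differentiable on `(a, L)`,
positive on `(a, L)`, vanishes at `L`, and satisfies `-½u'' = λu` on `(a, L)`, then
`λ ≤ π² / (2 (L - a)²)`. -/
theorem chemical_potential_cutoff_1d (a L lam : ℝ)
    (ha : 0 < a) (haL : a < L) (hlam : 0 < lam)
    (u : ℝ → ℝ)
    (hucont : ContinuousOn u (Set.Icc a L))
    (hud : ∀ x ∈ Set.Ioo a L, DifferentiableAt ℝ u x)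
    (hud2 : ∀ x ∈ Set.Ioo a L, DifferentiableAt ℝ (deriv u) x)
    (hupos : ∀ x ∈ Set.Ioo a L, 0 < u x)
    (huL : u L = 0)
    (heq : ∀ x ∈ Set.Ioo a L, -(1 / 2 : ℝ) * deriv (deriv u) x = lam * u x) :
    lam ≤ π ^ 2 / (2 * (L - a) ^ 2) :=
  chemical_potential_cutoff_1d_general a L lam haL u hucont hud hud2 hupos huL heq
end
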